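/- arXiv:1503.00767 — 3 statements merged into one kernel-verified Lean document; each statement's English description precedes it below -/
import Mathlib

section
/- Let f : ℝ → ℂ be continuously differentiable and antiperiodic with period 2π, i.e. f(θ + 2π) = -f(θ) for all θ. Then (i) sup over s ∈ [0,2π] of |f(s)| is at most ∫₀^{2π} |f'(θ)| dθ, and consequently (ii) ∫₀^{2π} |f(θ)|² dθ ≤ 4π² ∫₀^{2π} |f'(θ)|² dθ. -/
/-!
Antiperiodicity turns the increment of `f` over one period into `f s - f (s - 2π) = 2 f s`, so
the fundamental theorem of calculus bounds `2 ‖f s‖` by the integral of `‖f'‖` over a window of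
length `2π`; since `‖f'‖` is `2π`-periodic, every such window gives the same integral. Squaring
this pointwise bound, integrating, and applying Cauchy–Schwarz to `∫ ‖f'‖` gives the Poincaré
inequality.
-/

open MeasureTheory intervalIntegral

namespace Function

theorem Antiperiodic.periodic_norm {α E : Type*} [Add α] [SeminormedAddGroup E] {f : α → E}
    {c : α} (h : Antiperiodic f c) : Periodic (fun x => ‖f x‖) c := fun x => by
  simp only [h x, norm_neg]

theorem Antiperiodic.deriv {𝕜 F : Type*} [NontriviallyNormedField 𝕜] [NormedAddCommGroup F]
    [NormedSpace 𝕜 F] {f : 𝕜 → F} {c : 𝕜} (h : Antiperiodic f c) :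
    Antiperiodic (_root_.deriv f) c :=
  fun x => by rw [← deriv_comp_add_const, h.funext, deriv.neg']

end Function

theorem two_mul_norm_le_integral_norm_deriv_of_antiperiodic {E : Type*} [NormedAddCommGroup E]
    [NormedSpace ℝ E] [CompleteSpace E] {f : ℝ → E} {c : ℝ} (hf : ContDiff ℝ 1 f)
    (h : Function.Antiperiodic f c) (hc : 0 ≤ c) (s : ℝ) :
    2 * ‖f s‖ ≤ ∫ θ in 0..c, ‖deriv f θ‖ :=
  calc 2 * ‖f s‖ = ‖f s - f (s - c)‖ := by
        rw [h.sub_eq, sub_neg_eq_add, ← two_smul ℝ, norm_smul, Real.norm_two]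
    _ = ‖∫ θ in s - c..s, deriv f θ‖ := by
        rw [integral_deriv_eq_sub (fun x _ => hf.differentiable one_ne_zero x)
          ((hf.continuous_deriv le_rfl).intervalIntegrable _ _)]
    _ ≤ ∫ θ in s - c..s, ‖deriv f θ‖ :=
        intervalIntegral.norm_integral_le_integral_norm (by linarith)
    _ = ∫ θ in 0..c, ‖deriv f θ‖ := by
        simpa using h.deriv.periodic_norm.intervalIntegral_add_eq (s - c) 0

theorem sq_intervalIntegral_le_mul_integral_sq {g : ℝ → ℝ} {a b : ℝ} (hab : a ≤ b)
    (hg : IntervalIntegrable g volume a b)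
    (hg2 : IntervalIntegrable (fun x => g x ^ 2) volume a b) :
    (∫ x in a..b, g x) ^ 2 ≤ (b - a) * ∫ x in a..b, g x ^ 2 := by
  set M := ∫ x in a..b, g x
  set I := ∫ x in a..b, g x ^ 2
  have hexpand : ∫ x in a..b, ((b - a) * g x - M) ^ 2 = (b - a) * ((b - a) * I - M ^ 2) := by
    have hpoly : ∀ x, ((b - a) * g x - M) ^ 2
        = (b - a) ^ 2 * g x ^ 2 - 2 * (b - a) * M * g x + M ^ 2 := fun x => by ring
    simp_rw [hpoly]
    rw [integral_add ((hg2.const_mul _).sub (hg.const_mul _)) intervalIntegrable_const,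
      integral_sub (hg2.const_mul _) (hg.const_mul _), intervalIntegral.integral_const_mul,
      intervalIntegral.integral_const_mul, intervalIntegral.integral_const, smul_eq_mul]
    ring
  rcases hab.eq_or_lt with rfl | hlt
  · simp [M]
  · have hnonneg : 0 ≤ (b - a) * ((b - a) * I - M ^ 2) :=
      hexpand ▸ integral_nonneg hab fun x _ => sq_nonneg _
    nlinarith [(mul_nonneg_iff_of_pos_left (sub_pos.2 hlt)).1 hnonneg]

theorem antiperiodic_sup_bound_and_poincare (f : ℝ → ℂ) (hf : ContDiff ℝ 1 f)
    (hap : Function.Antiperiodic f (2 * Real.pi)) :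
    (∀ s ∈ Set.Icc (0:ℝ) (2 * Real.pi),
      ‖f s‖ ≤ ∫ θ in (0:ℝ)..(2 * Real.pi), ‖deriv f θ‖) ∧
    (∫ θ in (0:ℝ)..(2 * Real.pi), ‖f θ‖ ^ 2)
      ≤ 4 * Real.pi ^ 2 * ∫ θ in (0:ℝ)..(2 * Real.pi), ‖deriv f θ‖ ^ 2 := by
  have hT : 0 ≤ 2 * Real.pi := by positivity
  set M := ∫ θ in (0:ℝ)..(2 * Real.pi), ‖deriv f θ‖
  have hsup : ∀ s, ‖f s‖ ≤ M := fun s => by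
    linarith [two_mul_norm_le_integral_norm_deriv_of_antiperiodic hf hap hT s, norm_nonneg (f s)]
  refine ⟨fun s _ => hsup s, ?_⟩
  have hg := (hf.continuous_deriv le_rfl).norm
  calc (∫ θ in (0:ℝ)..(2 * Real.pi), ‖f θ‖ ^ 2)
      ≤ M ^ 2 * |2 * Real.pi - 0| := (Real.le_norm_self _).trans <|
        intervalIntegral.norm_integral_le_of_norm_le_const fun θ _ => by
          rw [norm_pow, norm_norm]
          exact pow_le_pow_left₀ (norm_nonneg _) (hsup θ) 2
    _ ≤ (2 * Real.pi * ∫ θ in (0:ℝ)..(2 * Real.pi), ‖deriv f θ‖ ^ 2) * (2 * Real.pi) := by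
        rw [sub_zero, abs_of_nonneg hT]
        gcongr
        simpa using sq_intervalIntegral_le_mul_integral_sq hT (hg.intervalIntegrable _ _)
          ((hg.pow 2).intervalIntegrable _ _)
    _ = 4 * Real.pi ^ 2 * ∫ θ in (0:ℝ)..(2 * Real.pi), ‖deriv f θ‖ ^ 2 := by ring
end

section
/- Let R > 0 and let (u_l)_{l ∈ ℤ} be a family of complex numbers such that M := ∑_{l ∈ ℤ} |u_l|² ∫₀^R e^{2|l| r} dr is finite. Then for every natural number k, the sum ∑_{l ∈ ℤ} |l|^{2k} |u_l|² converges and is at most (2k+1)! · M / R^{2k+1}. -/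
open intervalIntegral

/-!
Bounding the exponential below by one term of its Taylor series, `e^{2|l|r} ≥ (2|l|r)^{2k}/(2k)!`,
and integrating over `[0, R]` gives `∫₀^R e^{2|l|r} dr ≥ (2|l|)^{2k} R^{2k+1}/(2k+1)!`. Hence each
term `|l|^{2k}|u_l|²` is dominated by `(2k+1)!/R^{2k+1}` times the corresponding term of `M`.
-/

open Real Nat

lemma pow_mul_pow_div_factorial_le_integral_exp {a R : ℝ} (ha : 0 ≤ a) (hR : 0 ≤ R) (n : ℕ) :
    a ^ n * R ^ (n + 1) / (n + 1)! ≤ ∫ r in (0:ℝ)..R, exp (a * r) := by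
  calc a ^ n * R ^ (n + 1) / (n + 1)! = ∫ r in (0:ℝ)..R, a ^ n / n ! * r ^ n := by
        rw [integral_const_mul, integral_pow, zero_pow n.succ_ne_zero, sub_zero, factorial_succ]
        push_cast
        field_simp
    _ ≤ ∫ r in (0:ℝ)..R, exp (a * r) := by
        refine integral_mono_on hR (intervalIntegrable_pow n |>.const_mul _)
          ((by fun_prop : Continuous fun r => exp (a * r)).intervalIntegrable _ _) fun r hr => ?_
        rw [div_mul_eq_mul_div, ← mul_pow]
        exact pow_div_factorial_le_exp (a * r) (mul_nonneg ha hr.1) n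

lemma abs_pow_le_mul_integral_exp {R : ℝ} (hR : 0 < R) (x : ℝ) (k : ℕ) :
    |x| ^ (2 * k) ≤
      (2 * k + 1)! / R ^ (2 * k + 1) * ∫ r in (0:ℝ)..R, exp (2 * |x| * r) := by
  have hTaylor := pow_mul_pow_div_factorial_le_integral_exp (by positivity : 0 ≤ 2 * |x|) hR.le
    (2 * k)
  rw [div_le_iff₀ (by positivity)] at hTaylor
  rw [div_mul_eq_mul_div, le_div_iff₀ (by positivity)]
  calc |x| ^ (2 * k) * R ^ (2 * k + 1) ≤ (2 * |x|) ^ (2 * k) * R ^ (2 * k + 1) := by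
        gcongr
        linarith [abs_nonneg x]
    _ ≤ _ := by linarith

theorem weighted_coefficient_decay (R : ℝ) (hR : 0 < R) (u : ℤ → ℂ)
    (hM : Summable (fun l : ℤ =>
      ‖u l‖ ^ 2 * ∫ r in (0:ℝ)..R, Real.exp (2 * |(l : ℝ)| * r))) (k : ℕ) :
    Summable (fun l : ℤ => |(l : ℝ)| ^ (2 * k) * ‖u l‖ ^ 2) ∧
    (∑' l : ℤ, |(l : ℝ)| ^ (2 * k) * ‖u l‖ ^ 2)
      ≤ (Nat.factorial (2 * k + 1) : ℝ) *
          (∑' l : ℤ, ‖u l‖ ^ 2 * ∫ r in (0:ℝ)..R, Real.exp (2 * |(l : ℝ)| * r))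
        / R ^ (2 * k + 1) := by
  set C : ℝ := (2 * k + 1)! / R ^ (2 * k + 1)
  have hdom : ∀ l : ℤ, |(l : ℝ)| ^ (2 * k) * ‖u l‖ ^ 2 ≤
      C * (‖u l‖ ^ 2 * ∫ r in (0:ℝ)..R, exp (2 * |(l : ℝ)| * r)) := fun l => by
    calc |(l : ℝ)| ^ (2 * k) * ‖u l‖ ^ 2
        ≤ (C * ∫ r in (0:ℝ)..R, exp (2 * |(l : ℝ)| * r)) * ‖u l‖ ^ 2 := by
          gcongr
          exact abs_pow_le_mul_integral_exp hR l k
      _ = _ := by ring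
  have hsum := (hM.mul_left C).of_nonneg_of_le (fun l => by positivity) hdom
  refine ⟨hsum, ?_⟩
  calc ∑' l : ℤ, |(l : ℝ)| ^ (2 * k) * ‖u l‖ ^ 2
      ≤ ∑' l : ℤ, C * (‖u l‖ ^ 2 * ∫ r in (0:ℝ)..R, exp (2 * |(l : ℝ)| * r)) :=
        hsum.tsum_le_tsum hdom (hM.mul_left C)
    _ = _ := by rw [tsum_mul_left]; ring
end

section
/- Let R > 0, κ ∈ ℝ, M ≥ 0, and let ρ : (0, R] → ℝ be positive and differentiable with ρ'(r) = α(r) ρ(r) for some function α satisfying |α(r) − κ/r| ≤ M r for all r ∈ (0, R]. Then for all r ∈ (0, R]: ρ(R) R^{-κ} e^{-M R²/2} · r^{κ} ≤ ρ(r) ≤ ρ(R) R^{-κ} e^{M R²/2} · r^{κ}. -/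
/-!
Write `ρ r = exp (g r) * r ^ κ` with `g = log ρ - κ log`. Then `g' = α - κ / r`, so
`|g'(s)| ≤ M s`, and comparing `g` with `M s² / 2` on `[r, R]` gives
`|g R - g r| ≤ M (R² - r²) / 2 ≤ M R² / 2`. Exponentiating yields both bounds.
-/

open Real Set

theorem norm_image_sub_le_sub_of_norm_deriv_le_deriv {E : Type*} [NormedAddCommGroup E]
    [NormedSpace ℝ E] {g g' : ℝ → E} {B B' : ℝ → ℝ} {a b : ℝ} (hab : a ≤ b)
    (hg : ∀ x ∈ Icc a b, HasDerivAt g (g' x) x) (hB : ∀ x ∈ Icc a b, HasDerivAt B (B' x) x)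
    (bound : ∀ x ∈ Ico a b, ‖g' x‖ ≤ B' x) : ‖g b - g a‖ ≤ B b - B a :=
  image_norm_le_of_norm_deriv_right_le_deriv_boundary' (f := fun x => g x - g a)
    (B := fun x => B x - B a)
    (fun x hx => ((hg x hx).sub_const (g a)).continuousAt.continuousWithinAt)
    (fun x hx => ((hg x (Ico_subset_Icc_self hx)).sub_const (g a)).hasDerivWithinAt)
    (by simp)
    (fun x hx => ((hB x hx).sub_const (B a)).continuousAt.continuousWithinAt)
    (fun x hx => ((hB x (Ico_subset_Icc_self hx)).sub_const (B a)).hasDerivWithinAt)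
    bound (right_mem_Icc.2 hab)

theorem hasDerivAt_log_sub_mul_log {ρ : ℝ → ℝ} {a κ r : ℝ}
    (hρ : HasDerivAt ρ (a * ρ r) r) (hρr : ρ r ≠ 0) (hr : r ≠ 0) :
    HasDerivAt (fun s => log (ρ s) - κ * log s) (a - κ / r) r := by
  have hlog : HasDerivAt (fun s => log (ρ s)) a r := by
    simpa only [mul_div_assoc, div_self hρr, mul_one] using hρ.log hρr
  rw [div_eq_mul_inv]
  exact hlog.sub ((hasDerivAt_log hr).const_mul κ)

theorem exp_log_sub_mul_log_mul_rpow {x r κ : ℝ} (hx : 0 < x) (hr : 0 < r) :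
    exp (log x - κ * log r) * r ^ κ = x := by
  rw [rpow_def_of_pos hr, ← exp_add, mul_comm (log r), sub_add_cancel, exp_log hx]

theorem gronwall_power_comparison_general (R : ℝ) (κ M : ℝ) (hM : 0 ≤ M)
    (ρ α : ℝ → ℝ)
    (hpos : ∀ r ∈ Set.Ioc (0:ℝ) R, 0 < ρ r)
    (hderiv : ∀ r ∈ Set.Ioc (0:ℝ) R, HasDerivAt ρ (α r * ρ r) r)
    (hα : ∀ r ∈ Set.Ioc (0:ℝ) R, |α r - κ / r| ≤ M * r) :
    ∀ r ∈ Set.Ioc (0:ℝ) R,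
      ρ R * R ^ (-κ) * Real.exp (-(M * R ^ 2) / 2) * r ^ κ ≤ ρ r ∧
      ρ r ≤ ρ R * R ^ (-κ) * Real.exp (M * R ^ 2 / 2) * r ^ κ := by
  intro r hr
  set g : ℝ → ℝ := fun s => log (ρ s) - κ * log s
  have hR : R ∈ Ioc 0 R := ⟨hr.1.trans_le hr.2, le_rfl⟩
  have hsub : Icc r R ⊆ Ioc 0 R := fun s hs => ⟨hr.1.trans_le hs.1, hs.2⟩
  have hgR_sub_gr : |g R - g r| ≤ M * R ^ 2 / 2 - M * r ^ 2 / 2 :=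
    norm_image_sub_le_sub_of_norm_deriv_le_deriv (B := fun s => M * s ^ 2 / 2) hr.2
      (fun s hs => hasDerivAt_log_sub_mul_log (hderiv s (hsub hs)) (hpos s (hsub hs)).ne'
        (hsub hs).1.ne')
      (fun s _ => (((hasDerivAt_pow 2 s).const_mul M).div_const 2).congr_deriv (by ring))
      (fun s hs => hα s (hsub (Ico_subset_Icc_self hs)))
  have hgap : |g R - g r| ≤ M * R ^ 2 / 2 :=
    hgR_sub_gr.trans (by linarith [mul_nonneg hM (sq_nonneg r)])
  have hρR : ∀ c, ρ R * R ^ (-κ) * exp c = exp (g R + c) := fun c => by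
    rw [exp_add, rpow_neg hR.1.le,
      ← exp_log_sub_mul_log_mul_rpow (hpos R hR) hR.1 (κ := κ),
      mul_inv_cancel_right₀ (rpow_pos_of_pos hR.1 κ).ne']
  rw [hρR, hρR, ← exp_log_sub_mul_log_mul_rpow (hpos r hr) hr.1 (κ := κ)]
  have hrκ : 0 ≤ r ^ κ := (rpow_pos_of_pos hr.1 κ).le
  obtain ⟨hlow, hup⟩ := abs_le.1 hgap
  exact ⟨by gcongr; linarith, by gcongr; linarith⟩

theorem gronwall_power_comparison (R : ℝ) (hR : 0 < R) (κ M : ℝ) (hM : 0 ≤ M)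
    (ρ α : ℝ → ℝ)
    (hpos : ∀ r ∈ Set.Ioc (0:ℝ) R, 0 < ρ r)
    (hderiv : ∀ r ∈ Set.Ioc (0:ℝ) R, HasDerivAt ρ (α r * ρ r) r)
    (hα : ∀ r ∈ Set.Ioc (0:ℝ) R, |α r - κ / r| ≤ M * r) :
    ∀ r ∈ Set.Ioc (0:ℝ) R,
      ρ R * R ^ (-κ) * Real.exp (-(M * R ^ 2) / 2) * r ^ κ ≤ ρ r ∧
      ρ r ≤ ρ R * R ^ (-κ) * Real.exp (M * R ^ 2 / 2) * r ^ κ :=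
  gronwall_power_comparison_general R κ M hM ρ α hpos hderiv hα
end
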